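/- Suppose char k = 2 and C = Spec k[x,y]/(y² − x³). Then the derivation d/dy is a regular vector field on C (i.e., a k-linear derivation of k[x,y]/(y²−x³)), but its pullback to the normalization k[t] (via x ↦ t², y ↦ t³) is the rational vector field (1/(3t²))·d/dt, which has a pole of order 2 at t = 0. -/

import Mathlib

/-! In characteristic 2 the partial derivative `∂/∂y` kills `y² − x³` (it is `2y = 0`), so
it preserves the ideal `(y² − x³)` and descends to the coordinate ring of the cusp. The
normalization is `aeval (t², t³)`, and the chain rule gives
`(ν f)' = ν(∂ₓf) · 2t + ν(∂_y f) · 3t² = t² · ν(∂_y f)`. -/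

set_option synthInstance.maxHeartbeats 1000000
set_option maxHeartbeats 1000000

/-- The ideal `(y² − x³) ⊂ k[x,y]` defining the cuspidal cubic. -/
noncomputable def cuspIdeal (k : Type) [Field k] : Ideal (MvPolynomial (Fin 2) k) :=
  Ideal.span {(MvPolynomial.X 1 : MvPolynomial (Fin 2) k) ^ 2 - MvPolynomial.X 0 ^ 3}

open MvPolynomial

theorem Derivation.map_aeval_eq_sum_pderiv {R B M σ : Type*} [CommSemiring R] [CommSemiring B]
    [Algebra R B] [AddCommMonoid M] [Module R M] [Module B M] [IsScalarTower R B M]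
    [Fintype σ] [DecidableEq σ] (d : Derivation R B M) (g : σ → B) (p : MvPolynomial σ R) :
    d (aeval g p) = ∑ i, aeval g (pderiv i p) • d (g i) := by
  induction p using MvPolynomial.induction_on with
  | C a => simp
  | add p q hp hq => simp [hp, hq, add_smul, Finset.sum_add_distrib]
  | mul_X p i hp =>
    simp [Derivation.leibniz, hp, add_smul, Finset.sum_add_distrib, mul_smul, Finset.smul_sum,
      Pi.single_apply, apply_ite (aeval g), ite_smul]

namespace Derivation

theorem map_mem_span_singleton {R A : Type*} [CommSemiring R] [CommSemiring A] [Algebra R A]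
    (d : Derivation R A A) {g : A} (hg : d g ∈ Ideal.span {g}) {x : A}
    (hx : x ∈ Ideal.span {g}) : d x ∈ Ideal.span {g} := by
  obtain ⟨a, rfl⟩ := Ideal.mem_span_singleton'.mp hx
  rw [leibniz, smul_eq_mul, smul_eq_mul]
  exact Ideal.add_mem _ (Ideal.mul_mem_left _ a hg)
    (Ideal.mul_mem_right _ _ (Ideal.mem_span_singleton_self g))

variable {R A : Type*} [CommRing R] [CommRing A] [Algebra R A]

noncomputable def quotient (d : Derivation R A A) (I : Ideal A) (hI : ∀ x ∈ I, d x ∈ I) :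
    Derivation R (A ⧸ I) (A ⧸ I) :=
  liftOfSurjective (Ideal.Quotient.mkₐ_surjective R I) fun x hx => by
    rw [Ideal.Quotient.mkₐ_eq_mk, Ideal.Quotient.eq_zero_iff_mem] at hx ⊢
    exact hI x hx

theorem quotient_mk (d : Derivation R A A) (I : Ideal A) (hI : ∀ x ∈ I, d x ∈ I) (x : A) :
    d.quotient I hI (Ideal.Quotient.mk I x) = Ideal.Quotient.mk I (d x) := by
  unfold quotient
  exact liftOfSurjective_apply _ _ x

end Derivation

noncomputable def cuspNormalization (k : Type) [CommRing k] :
    MvPolynomial (Fin 2) k →ₐ[k] Polynomial k :=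
  aeval ![Polynomial.X ^ 2, Polynomial.X ^ 3]

section CharTwo

variable (k : Type) [CommRing k] [CharP k 2]

theorem pderiv_one_sq_sub_cube :
    pderiv 1 ((X 1 : MvPolynomial (Fin 2) k) ^ 2 - X 0 ^ 3) = 0 := by
  simp [Derivation.leibniz_pow, CharTwo.two_eq_zero]

theorem derivative_cuspNormalization (p : MvPolynomial (Fin 2) k) :
    Polynomial.derivative (cuspNormalization k p) =
      Polynomial.X ^ 2 * cuspNormalization k (pderiv 1 p) := by
  rw [cuspNormalization, ← Polynomial.derivative'_apply, Derivation.map_aeval_eq_sum_pderiv]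
  have hX2 : Polynomial.derivative (Polynomial.X ^ 2 : Polynomial k) = 0 := by
    rw [Polynomial.derivative_X_pow, Nat.cast_ofNat, CharTwo.two_eq_zero, map_zero, zero_mul]
  have hX3 : Polynomial.derivative (Polynomial.X ^ 3 : Polynomial k) = Polynomial.X ^ 2 := by
    have h3 : (3 : k) = 1 := by linear_combination CharTwo.two_eq_zero (R := k)
    rw [Polynomial.derivative_X_pow, Nat.cast_ofNat, h3, map_one, one_mul]
  simp [Fin.sum_univ_two, hX2, hX3, mul_comm]

end CharTwo

section CuspDerivY

variable (k : Type) [Field k] [CharP k 2]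

noncomputable def cuspDerivY : Derivation k (MvPolynomial (Fin 2) k ⧸ cuspIdeal k)
    (MvPolynomial (Fin 2) k ⧸ cuspIdeal k) :=
  (pderiv 1).quotient (cuspIdeal k) fun _ =>
    (pderiv 1).map_mem_span_singleton (by rw [pderiv_one_sq_sub_cube]; exact Ideal.zero_mem _)

theorem cuspDerivY_mk (p : MvPolynomial (Fin 2) k) :
    cuspDerivY k (Ideal.Quotient.mk _ p) = Ideal.Quotient.mk _ (pderiv 1 p) :=
  Derivation.quotient_mk _ _ _ p

end CuspDerivY

/-- Suppose `char k = 2` and `C = Spec k[x,y]/(y²−x³)`.  Then `d/dy` is a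
regular vector field on `C` (a `k`-linear derivation of `k[x,y]/(y²−x³)` with
`x ↦ 0`, `y ↦ 1`), but its pullback along the normalization
`ν : k[x,y]/(y²−x³) → k[t]`, `x ↦ t²`, `y ↦ t³`, is the rational vector field
`(1/(3t²)) d/dt`: for every `f` one has `(ν f)' = t² · ν(d/dy f)` (and
`3 = 1` in characteristic `2`), so the pullback has a pole of order 2 at
`t = 0`. -/
theorem stmt10 (k : Type) [Field k] (hchar : CharP k 2)
    (ν : (MvPolynomial (Fin 2) k ⧸ cuspIdeal k) →ₐ[k] Polynomial k)
    (hνx : ν (Ideal.Quotient.mk (cuspIdeal k) (MvPolynomial.X 0)) =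
      Polynomial.X ^ 2)
    (hνy : ν (Ideal.Quotient.mk (cuspIdeal k) (MvPolynomial.X 1)) =
      Polynomial.X ^ 3) :
    ∃ D : Derivation k (MvPolynomial (Fin 2) k ⧸ cuspIdeal k)
        (MvPolynomial (Fin 2) k ⧸ cuspIdeal k),
      D (Ideal.Quotient.mk (cuspIdeal k) (MvPolynomial.X 0)) = 0 ∧
      D (Ideal.Quotient.mk (cuspIdeal k) (MvPolynomial.X 1)) = 1 ∧
      ∀ f : MvPolynomial (Fin 2) k ⧸ cuspIdeal k,
        Polynomial.derivative (ν f) = Polynomial.X ^ 2 * ν (D f) := by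
  have := hchar
  have hν : ∀ p, ν (Ideal.Quotient.mk _ p) = cuspNormalization k p := by
    refine AlgHom.congr_fun (φ₁ := ν.comp (Ideal.Quotient.mkₐ k _)) (algHom_ext fun i => ?_)
    fin_cases i <;> simp [cuspNormalization, hνx, hνy]
  refine ⟨cuspDerivY k, by simp [cuspDerivY_mk], by simp [cuspDerivY_mk], fun f => ?_⟩
  obtain ⟨p, rfl⟩ := Ideal.Quotient.mk_surjective f
  rw [cuspDerivY_mk, hν, hν, derivative_cuspNormalization]
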